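/- The graph G₅ has exactly 60 roots, every root α of G₅ satisfies q_α = 2 and N(α) = 1 (so rk(α) = 3/2), and consequently the rank of G₅ equals 3/2. -/

import Mathlib

/-- A root of a graph `L`: a path (injective walk) with exactly 3 edges whose initial vertex
has degree at least 3 (degree = number of neighbors). -/
def RootT {V : Type*} (L : SimpleGraph V) : Type _ :=
  {p : Σ u w : V, L.Walk u w //
    p.2.2.IsPath ∧ p.2.2.length = 3 ∧ 3 ≤ Nat.card (L.neighborSet p.1)}

/-- The initial vertex of a root. -/
def rootStart {V : Type*} {L : SimpleGraph V} (α : RootT L) : V := α.1.1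

/-- The terminal vertex of a root. -/
def rootEnd {V : Type*} {L : SimpleGraph V} (α : RootT L) : V := α.1.2.1

/-- `q_α`: the degree of the initial vertex of the root `α`, minus one. -/
noncomputable def rootQ {V : Type*} {L : SimpleGraph V} (α : RootT L) : ℕ :=
  Nat.card (L.neighborSet (rootStart α)) - 1

/-- `N(α)`: the number of roots `β` distinct from `α` having the same initial and the same
terminal vertex as `α`. -/
noncomputable def rootN {V : Type*} {L : SimpleGraph V} (α : RootT L) : ℕ :=
  Nat.card {β : RootT L // β ≠ α ∧ rootStart β = rootStart α ∧ rootEnd β = rootEnd α}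

/-- The rank of a root: `rk(α) = 1 + N(α) / q_α ∈ ℚ`. -/
noncomputable def rootRank {V : Type*} {L : SimpleGraph V} (α : RootT L) : ℚ :=
  1 + (rootN α : ℚ) / (rootQ α : ℚ)

/-- The rank of a graph: the average of the ranks of its roots. -/
noncomputable def graphRank {V : Type*} (L : SimpleGraph V) : ℚ :=
  (∑ᶠ α : RootT L, rootRank α) / (Nat.card (RootT L) : ℚ)

/-- The graph `G₅` (the simplicial inverse pyramid): vertices `vᵢ = i` for `0 ≤ i ≤ 5`,
`mᵢ = 6 + i` for `0 ≤ i ≤ 5`, `t = 12`, `b = 13`; edges `vᵢ ~ v_{(i+1) % 6}`, `vᵢ ~ mᵢ`,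
`mᵢ ~ t` for `i` even and `mᵢ ~ b` for `i` odd. -/
def G5 : SimpleGraph (Fin 14) :=
  SimpleGraph.fromRel (fun a b => (a, b) ∈
    ([(0, 1), (1, 2), (2, 3), (3, 4), (4, 5), (5, 0),
      (0, 6), (1, 7), (2, 8), (3, 9), (4, 10), (5, 11),
      (6, 12), (8, 12), (10, 12), (7, 13), (9, 13), (11, 13)] : List (Fin 14 × Fin 14)))

/-!
A root is determined by its four vertices `a, b, c, d`, so the roots from `a` to `d` correspond
to the pairs `(b, c)` completing such a path. Every vertex of degree at least 3 in `G₅` has degree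
exactly 3, whence `q_α = 2`; the remaining facts — 60 roots in total, and exactly two roots
between the endpoints of any root (two 3-paths with common endpoints close up to a hexagon) — are
finite checks on these quadruples.
-/

open SimpleGraph

section Roots

variable {V : Type*} {L : SimpleGraph V}

theorem SimpleGraph.Walk.exists_eq_cons_cons_cons_of_length_eq_three {u w : V} (p : L.Walk u w)
    (h : p.length = 3) :
    ∃ (b c : V) (hub : L.Adj u b) (hbc : L.Adj b c) (hcw : L.Adj c w),
      p = .cons hub (.cons hbc (.cons hcw .nil)) := by
  match p, h with
  | .cons hub (.cons hbc (.cons hcw .nil)), _ => exact ⟨_, _, hub, hbc, hcw, rfl⟩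

-- `a b c d` are the vertices of a root in order; adjacency already separates consecutive ones.
def SimpleGraph.IsRoot (L : SimpleGraph V) (a b c d : V) : Prop :=
  L.Adj a b ∧ L.Adj b c ∧ L.Adj c d ∧ a ≠ c ∧ a ≠ d ∧ b ≠ d ∧ 3 ≤ Nat.card (L.neighborSet a)

instance [DecidableEq V] [DecidableRel L.Adj] [L.LocallyFinite] (a b c d : V) :
    Decidable (L.IsRoot a b c d) :=
  decidable_of_iff
    (L.Adj a b ∧ L.Adj b c ∧ L.Adj c d ∧ a ≠ c ∧ a ≠ d ∧ b ≠ d ∧ 3 ≤ L.degree a) <| by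
    rw [SimpleGraph.IsRoot, ← card_neighborSet_eq_degree, Nat.card_eq_fintype_card]

def SimpleGraph.IsRoot.toRootT {a b c d : V} (h : L.IsRoot a b c d) : RootT L :=
  ⟨⟨a, d, .cons h.1 (.cons h.2.1 (.cons h.2.2.1 .nil))⟩, by
    obtain ⟨hab, hbc, hcd, hac, had, hbd, hdeg⟩ := h
    refine ⟨?_, rfl, hdeg⟩
    simp only [Walk.isPath_def, Walk.support_cons, Walk.support_nil, List.nodup_cons,
      List.mem_cons, List.not_mem_nil, List.nodup_nil, or_false, not_or, not_false_eq_true,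
      and_true]
    exact ⟨⟨hab.ne, hac, had⟩, ⟨hbc.ne, hbd⟩, hcd.ne⟩⟩

def rootOfMiddle (a d : V) (bc : {bc : V × V // L.IsRoot a bc.1 bc.2 d}) :
    {β : RootT L // rootStart β = a ∧ rootEnd β = d} :=
  ⟨bc.2.toRootT, rfl, rfl⟩

theorem rootOfMiddle_bijective (a d : V) : Function.Bijective (rootOfMiddle (L := L) a d) := by
  constructor
  · rintro ⟨⟨b, c⟩, h⟩ ⟨⟨b', c'⟩, h'⟩ heq
    have hb : b = b' := congrArg (fun β : {β : RootT L // _} => β.1.1.2.2.getVert 1) heq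
    have hc : c = c' := congrArg (fun β : {β : RootT L // _} => β.1.1.2.2.getVert 2) heq
    subst hb hc
    rfl
  · rintro ⟨⟨⟨u, w, p⟩, hp, hlen, hdeg⟩, rfl, rfl⟩
    obtain ⟨b, c, hub, hbc, hcw, rfl⟩ := p.exists_eq_cons_cons_cons_of_length_eq_three hlen
    have hnodup := hp.support_nodup
    simp only [Walk.support_cons, Walk.support_nil, List.nodup_cons, List.mem_cons,
      List.not_mem_nil, or_false, not_or] at hnodup
    exact ⟨⟨(b, c), hub, hbc, hcw, hnodup.1.2.1, hnodup.1.2.2, hnodup.2.1.2, hdeg⟩, rfl⟩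

theorem card_roots_between (a d : V) :
    Nat.card {β : RootT L // rootStart β = a ∧ rootEnd β = d} =
      Nat.card {bc : V × V // L.IsRoot a bc.1 bc.2 d} :=
  (Nat.card_eq_of_bijective _ (rootOfMiddle_bijective a d)).symm

theorem RootT.exists_isRoot (α : RootT L) : ∃ b c, L.IsRoot (rootStart α) b c (rootEnd α) := by
  obtain ⟨⟨⟨b, c⟩, h⟩, -⟩ := (rootOfMiddle_bijective (L := L) _ _).2 ⟨α, rfl, rfl⟩
  exact ⟨b, c, h⟩

theorem card_rootT_eq_sum [Fintype V] :
    Nat.card (RootT L) = ∑ a, ∑ d, Nat.card {bc : V × V // L.IsRoot a bc.1 bc.2 d} := by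
  have : ∀ ad : V × V, Finite {β : RootT L // (rootStart β, rootEnd β) = ad} := fun ad =>
    .of_equiv _ ((Equiv.ofBijective _ (rootOfMiddle_bijective ad.1 ad.2)).trans
      (Equiv.subtypeEquivRight fun _ => by rw [Prod.ext_iff]))
  rw [← Nat.card_congr (Equiv.sigmaFiberEquiv fun β : RootT L => (rootStart β, rootEnd β)),
    Nat.card_sigma, Fintype.sum_prod_type]
  simp only [Prod.ext_iff, card_roots_between]

theorem rootN_eq_card_sub_one (α : RootT L) :
    rootN α = Nat.card {β : RootT L // rootStart β = rootStart α ∧ rootEnd β = rootEnd α} - 1 := by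
  have hdiff : {β : RootT L | β ≠ α ∧ rootStart β = rootStart α ∧ rootEnd β = rootEnd α} =
      {β | rootStart β = rootStart α ∧ rootEnd β = rootEnd α} \ {α} := by
    ext β
    simp only [Set.mem_ofPred_eq, Set.mem_sdiff, Set.mem_singleton_iff]
    tauto
  calc rootN α = {β : RootT L | β ≠ α ∧ rootStart β = rootStart α ∧ rootEnd β = rootEnd α}.ncard :=
        rfl
    _ = _ := by rw [hdiff]; exact Set.ncard_sdiff_singleton_of_mem ⟨rfl, rfl⟩

theorem graphRank_eq_of_forall_rootRank_eq {r : ℚ} (hcard : Nat.card (RootT L) ≠ 0)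
    (h : ∀ α : RootT L, rootRank α = r) : graphRank L = r := by
  have := Nat.finite_of_card_ne_zero hcard
  have := Fintype.ofFinite (RootT L)
  rw [graphRank, finsum_eq_sum_of_fintype, Finset.sum_congr rfl fun α _ => h α, Finset.sum_const,
    Finset.card_univ, ← Nat.card_eq_fintype_card, nsmul_eq_mul]
  field_simp

end Roots

def G5.neighbors : Fin 14 → List (Fin 14) :=
  ![[1, 5, 6], [0, 2, 7], [1, 3, 8], [2, 4, 9], [3, 5, 10], [4, 0, 11], [0, 12], [1, 13],
    [2, 12], [3, 13], [4, 12], [5, 13], [6, 8, 10], [7, 9, 11]]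

theorem G5.adj_iff : ∀ a b, G5.Adj a b ↔ b ∈ G5.neighbors a := by
  unfold G5
  decide

-- Searching these short lists instead of the edge list of `G5` keeps the kernel checks below fast.
instance : DecidableRel G5.Adj := fun a b => decidable_of_iff _ (G5.adj_iff a b).symm

theorem G5.degree_eq_three_of_three_le : ∀ a : Fin 14, 3 ≤ G5.degree a → G5.degree a = 3 := by
  decide

theorem G5.sum_card_isRoot :
    ∑ a : Fin 14, ∑ d : Fin 14, Fintype.card {bc : Fin 14 × Fin 14 // G5.IsRoot a bc.1 bc.2 d} =
      60 := by
  decide +kernel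

theorem G5.card_isRoot_eq_two : ∀ a b c d : Fin 14, G5.IsRoot a b c d →
    Fintype.card {bc : Fin 14 × Fin 14 // G5.IsRoot a bc.1 bc.2 d} = 2 := by
  decide +kernel

theorem G5.card_rootT : Nat.card (RootT G5) = 60 := by
  simp only [card_rootT_eq_sum, Nat.card_eq_fintype_card, G5.sum_card_isRoot]

theorem G5.rootQ_eq_two (α : RootT G5) : rootQ α = 2 := by
  have hdeg : 3 ≤ Nat.card (G5.neighborSet (rootStart α)) := α.2.2.2
  rw [Nat.card_eq_fintype_card, card_neighborSet_eq_degree] at hdeg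
  rw [rootQ, Nat.card_eq_fintype_card, card_neighborSet_eq_degree,
    G5.degree_eq_three_of_three_le _ hdeg]

theorem G5.rootN_eq_one (α : RootT G5) : rootN α = 1 := by
  obtain ⟨b, c, h⟩ := α.exists_isRoot
  rw [rootN_eq_card_sub_one, card_roots_between, Nat.card_eq_fintype_card,
    G5.card_isRoot_eq_two _ b c _ h]

/-- `G₅` has exactly 60 roots, every root `α` satisfies `q_α = 2`, `N(α) = 1` and
`rk(α) = 3/2`, and consequently `rk(G₅) = 3/2`. -/
theorem rank_G5 :
    Nat.card (RootT G5) = 60 ∧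
    (∀ α : RootT G5, rootQ α = 2 ∧ rootN α = 1 ∧ rootRank α = 3 / 2) ∧
    graphRank G5 = 3 / 2 := by
  have hrank (α : RootT G5) : rootRank α = 3 / 2 := by
    rw [rootRank, G5.rootQ_eq_two, G5.rootN_eq_one]
    norm_num
  refine ⟨G5.card_rootT, fun α => ⟨G5.rootQ_eq_two α, G5.rootN_eq_one α, hrank α⟩, ?_⟩
  exact graphRank_eq_of_forall_rootRank_eq (by rw [G5.card_rootT]; norm_num) hrank
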